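/- Let γ > 1 and define ζ(t,x,v) = (1/2) min( (γ−|v|)₊/5, ((γ²+t)₊/13)^{1/2}, ((γ³−|x|)₊/(25γ))^{1/2} ) on ℝ×ℝᵈ×ℝᵈ. If z ∈ Q_r(z₀) ⊆ Q_γ for some r > 0 and z₀ ∈ Q_γ, then |ζ(z) − ζ(z₀)| ≤ r/2. -/
import Mathlib


/-- The kinetic cylinder of radius `r` centered at `z₀`. -/
def kCyl {d : ℕ} (r : ℝ) (z₀ : ℝ × EuclideanSpace ℝ (Fin d) × EuclideanSpace ℝ (Fin d)) :
    Set (ℝ × EuclideanSpace ℝ (Fin d) × EuclideanSpace ℝ (Fin d)) :=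
  {z | -r ^ 2 < z.1 - z₀.1 ∧ z.1 - z₀.1 ≤ 0 ∧
    ‖z.2.1 - z₀.2.1 - (z.1 - z₀.1) • z₀.2.2‖ < r ^ 3 ∧ ‖z.2.2 - z₀.2.2‖ < r}

/-- The localization function `ζ` of the cylinder `Q_γ`. -/
noncomputable def kZeta {d : ℕ} (γ : ℝ)
    (z : ℝ × EuclideanSpace ℝ (Fin d) × EuclideanSpace ℝ (Fin d)) : ℝ :=
  (1 / 2) * min (max (γ - ‖z.2.2‖) 0 / 5)
    (min (Real.sqrt (max (γ ^ 2 + z.1) 0 / 13))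
      (Real.sqrt (max (γ ^ 3 - ‖z.2.1‖) 0 / (25 * γ))))

private lemma sqrt_add_le' (x y : ℝ) (hx : 0 ≤ x) (hy : 0 ≤ y) :
    Real.sqrt (x + y) ≤ Real.sqrt x + Real.sqrt y := by
  have h : x + y ≤ (Real.sqrt x + Real.sqrt y) ^ 2 := by
    nlinarith [Real.sq_sqrt hx, Real.sq_sqrt hy, Real.sqrt_nonneg x, Real.sqrt_nonneg y]
  calc Real.sqrt (x + y) ≤ Real.sqrt ((Real.sqrt x + Real.sqrt y) ^ 2) := Real.sqrt_le_sqrt h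
    _ = Real.sqrt x + Real.sqrt y := Real.sqrt_sq (by positivity)

private lemma abs_sqrt_sub_sqrt (a b : ℝ) (ha : 0 ≤ a) (hb : 0 ≤ b) :
    |Real.sqrt a - Real.sqrt b| ≤ Real.sqrt |a - b| := by
  rw [abs_sub_le_iff]
  constructor
  · have h1 : Real.sqrt a ≤ Real.sqrt b + Real.sqrt |a - b| := by
      calc Real.sqrt a ≤ Real.sqrt (b + |a - b|) := by
            apply Real.sqrt_le_sqrt
            have := le_abs_self (a - b); linarith
        _ ≤ Real.sqrt b + Real.sqrt |a - b| := sqrt_add_le' _ _ hb (abs_nonneg _)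
    linarith
  · have h1 : Real.sqrt b ≤ Real.sqrt a + Real.sqrt |a - b| := by
      calc Real.sqrt b ≤ Real.sqrt (a + |a - b|) := by
            apply Real.sqrt_le_sqrt
            have := neg_abs_le (a - b); linarith
        _ ≤ Real.sqrt a + Real.sqrt |a - b| := sqrt_add_le' _ _ ha (abs_nonneg _)
    linarith

set_option maxHeartbeats 1000000 in
theorem stmt2 {d : ℕ} (γ : ℝ) (hγ : 1 < γ)
    (z z₀ : ℝ × EuclideanSpace ℝ (Fin d) × EuclideanSpace ℝ (Fin d))
    (r : ℝ) (hr : 0 < r)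
    (hz₀ : z₀ ∈ kCyl γ (0, 0, 0))
    (hz : z ∈ kCyl r z₀)
    (hsub : kCyl r z₀ ⊆ kCyl γ (0, 0, 0)) :
    |kZeta γ z - kZeta γ z₀| ≤ r / 2 := by
  have hγ0 : (0:ℝ) < γ := by linarith
  obtain ⟨ht1, ht2, hx, hv⟩ := hz
  obtain ⟨h0t1, h0t2, h0x, h0v⟩ := hz₀
  simp only [sub_zero, smul_zero, sub_zero] at h0t1 h0t2 h0x h0v
  -- get r² < 2γ² by plugging a test point into hsub
  have hrγ : r ^ 2 < 2 * γ ^ 2 := by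
    have hw : (z₀.1 - r ^ 2 / 2, z₀.2.1 + (-(r ^ 2 / 2)) • z₀.2.2, z₀.2.2) ∈ kCyl r z₀ := by
      refine ⟨by nlinarith, by nlinarith, ?_, by simpa using hr⟩
      have : z₀.2.1 + (-(r ^ 2 / 2)) • z₀.2.2 - z₀.2.1 -
          (z₀.1 - r ^ 2 / 2 - z₀.1) • z₀.2.2 = 0 := by
        rw [show z₀.1 - r ^ 2 / 2 - z₀.1 = -(r ^ 2 / 2) by ring]
        abel
      rw [this, norm_zero]
      positivity
    have := (hsub hw).1
    simp only [sub_zero] at this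
    nlinarith [h0t2]
  have hrγ' : r ≤ 24 * γ := by nlinarith
  -- bounds on the three coordinates
  have hv' : |‖z.2.2‖ - ‖z₀.2.2‖| ≤ r := (abs_norm_sub_norm_le _ _).trans hv.le
  have ht' : |z.1 - z₀.1| ≤ r ^ 2 := abs_le.2 ⟨by linarith, by linarith⟩
  have hx' : |‖z.2.1‖ - ‖z₀.2.1‖| ≤ r ^ 3 + r ^ 2 * γ := by
    refine (abs_norm_sub_norm_le _ _).trans ?_
    have h1 : ‖z.2.1 - z₀.2.1‖ ≤ ‖z.2.1 - z₀.2.1 - (z.1 - z₀.1) • z₀.2.2‖ +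
        ‖(z.1 - z₀.1) • z₀.2.2‖ := by
      have := norm_sub_le (z.2.1 - z₀.2.1 - (z.1 - z₀.1) • z₀.2.2) (-((z.1 - z₀.1) • z₀.2.2))
      simpa [sub_neg_eq_add] using this
    have h2 : ‖(z.1 - z₀.1) • z₀.2.2‖ ≤ r ^ 2 * γ := by
      rw [norm_smul, Real.norm_eq_abs]
      have hvγ : ‖z₀.2.2‖ ≤ γ := h0v.le
      nlinarith [abs_nonneg (z.1 - z₀.1), norm_nonneg z₀.2.2]
    linarith
  -- the three min-components
  set A := max (γ - ‖z.2.2‖) 0 / 5 with hA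
  set B := Real.sqrt (max (γ ^ 2 + z.1) 0 / 13) with hB
  set C := Real.sqrt (max (γ ^ 3 - ‖z.2.1‖) 0 / (25 * γ)) with hC
  set A₀ := max (γ - ‖z₀.2.2‖) 0 / 5 with hA₀
  set B₀ := Real.sqrt (max (γ ^ 2 + z₀.1) 0 / 13) with hB₀
  set C₀ := Real.sqrt (max (γ ^ 3 - ‖z₀.2.1‖) 0 / (25 * γ)) with hC₀
  have hAd : |A - A₀| ≤ r := by
    rw [hA, hA₀, div_sub_div_same, abs_div]
    have h1 : |max (γ - ‖z.2.2‖) 0 - max (γ - ‖z₀.2.2‖) 0| ≤ |(γ - ‖z.2.2‖) - (γ - ‖z₀.2.2‖)| :=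
      abs_max_sub_max_le_abs _ _ _
    have h2 : |(γ - ‖z.2.2‖) - (γ - ‖z₀.2.2‖)| = |‖z.2.2‖ - ‖z₀.2.2‖| := by
      rw [show (γ - ‖z.2.2‖) - (γ - ‖z₀.2.2‖) = -(‖z.2.2‖ - ‖z₀.2.2‖) by ring, abs_neg]
    rw [abs_of_pos (by norm_num : (0:ℝ) < 5)]
    rw [div_le_iff₀ (by norm_num : (0:ℝ) < 5)]
    nlinarith [h1, h2.le, h2.ge, hv']
  have hBd : |B - B₀| ≤ r := by
    refine (abs_sqrt_sub_sqrt _ _ (by positivity) (by positivity)).trans ?_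
    have h1 : |max (γ ^ 2 + z.1) 0 / 13 - max (γ ^ 2 + z₀.1) 0 / 13| ≤ r ^ 2 := by
      rw [div_sub_div_same, abs_div, abs_of_pos (by norm_num : (0:ℝ) < 13),
        div_le_iff₀ (by norm_num : (0:ℝ) < 13)]
      have := (abs_max_sub_max_le_abs (γ ^ 2 + z.1) (γ ^ 2 + z₀.1) 0)
      have h2 : |(γ ^ 2 + z.1) - (γ ^ 2 + z₀.1)| = |z.1 - z₀.1| := by ring_nf
      nlinarith [ht', abs_nonneg (z.1 - z₀.1)]
    calc Real.sqrt |max (γ ^ 2 + z.1) 0 / 13 - max (γ ^ 2 + z₀.1) 0 / 13|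
        ≤ Real.sqrt (r ^ 2) := Real.sqrt_le_sqrt h1
      _ = r := Real.sqrt_sq hr.le
  have hCd : |C - C₀| ≤ r := by
    refine (abs_sqrt_sub_sqrt _ _ (by positivity) (by positivity)).trans ?_
    have h1 : |max (γ ^ 3 - ‖z.2.1‖) 0 / (25 * γ) - max (γ ^ 3 - ‖z₀.2.1‖) 0 / (25 * γ)|
        ≤ r ^ 2 := by
      rw [div_sub_div_same, abs_div, abs_of_pos (by positivity : (0:ℝ) < 25 * γ),
        div_le_iff₀ (by positivity : (0:ℝ) < 25 * γ)]
      have h3 := abs_max_sub_max_le_abs (γ ^ 3 - ‖z.2.1‖) (γ ^ 3 - ‖z₀.2.1‖) 0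
      have h2 : |(γ ^ 3 - ‖z.2.1‖) - (γ ^ 3 - ‖z₀.2.1‖)| = |‖z.2.1‖ - ‖z₀.2.1‖| := by
        rw [show (γ ^ 3 - ‖z.2.1‖) - (γ ^ 3 - ‖z₀.2.1‖) = -(‖z.2.1‖ - ‖z₀.2.1‖) by ring, abs_neg]
      rw [h2] at h3
      have h4 : r ^ 3 ≤ 24 * γ * r ^ 2 := by nlinarith
      nlinarith [hx', h3]
    calc Real.sqrt |max (γ ^ 3 - ‖z.2.1‖) 0 / (25 * γ) - max (γ ^ 3 - ‖z₀.2.1‖) 0 / (25 * γ)|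
        ≤ Real.sqrt (r ^ 2) := Real.sqrt_le_sqrt h1
      _ = r := Real.sqrt_sq hr.le
  -- combine
  have hmin : |min A (min B C) - min A₀ (min B₀ C₀)| ≤ r := by
    refine (abs_min_sub_min_le_max _ _ _ _).trans (max_le hAd ?_)
    refine (abs_min_sub_min_le_max _ _ _ _).trans (max_le hBd hCd)
  have : kZeta γ z - kZeta γ z₀ = (1 / 2) * (min A (min B C) - min A₀ (min B₀ C₀)) := by
    rw [kZeta, kZeta]; ring
  rw [this, abs_mul, abs_of_pos (by norm_num : (0:ℝ) < 1/2)]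
  linarith
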